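/- Let 𝒢 be a groupoid with 𝒢₀ finite, A a unital 𝒢-graded algebra, X a finite split 𝒢-set via α, and fix x ∈ X. If Σ_{g∈𝒢, α_g(y)=x} A_{g⁻¹} A_g = Σ_{g∈𝒢} A_{d(g)} for all y ∈ X, then the Morita context [A #_α^𝒢 X, V^x, ^xV, A^{𝒢_x}, [ , ], ( , )] is strict (the map [ , ] : {^xV} ⊗_{A^{𝒢_x}} V^x → A #_α^𝒢 X is surjective); consequently A^{𝒢_x} and A #_α^𝒢 X are Morita equivalent. -/

import Mathlib

open scoped Classical

noncomputable section

universe u v w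

/-- A groupoid, presented as a set of morphisms with partially defined
composition.  `s g` is the domain (source) identity `d(g)`, `t g` the range
(target) identity `r(g)`; `mul g h` is the composite `gh`, meaningful when
`s g = t h`. -/
structure Gpd (G : Type u) where
  s : G → G
  t : G → G
  inv : G → G
  mul : G → G → G
  s_s : ∀ g, s (s g) = s g
  t_s : ∀ g, t (s g) = s g
  s_t : ∀ g, s (t g) = t g
  t_t : ∀ g, t (t g) = t g
  s_mul : ∀ g h, s g = t h → s (mul g h) = s h
  t_mul : ∀ g h, s g = t h → t (mul g h) = t g
  mul_assoc : ∀ g h l, s g = t h → s h = t l → mul (mul g h) l = mul g (mul h l)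
  mul_src : ∀ g, mul g (s g) = g
  tgt_mul : ∀ g, mul (t g) g = g
  s_inv : ∀ g, s (inv g) = t g
  t_inv : ∀ g, t (inv g) = s g
  inv_mul : ∀ g, mul (inv g) g = s g
  mul_inv : ∀ g, mul g (inv g) = t g

namespace Gpd

variable {G : Type u}

/-- `e` is an object (identity) of the groupoid. -/
def obj (𝒢 : Gpd G) (e : G) : Prop := 𝒢.s e = e

/-- The set `𝒢₀` of objects of the groupoid. -/
def Objs (𝒢 : Gpd G) : Set G := {e | 𝒢.obj e}

end Gpd

/-- An action `α = (X_g, α_g)` of a groupoid `𝒢` on a set `X`: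
`car g` is the subset `X_g` and `act g` restricts to the bijection
`α_g : X_{g⁻¹} → X_g`. -/
structure GpdSetAction {G : Type u} (𝒢 : Gpd G) (X : Type v) where
  car : G → Set X
  act : G → X → X
  car_t : ∀ g, car g = car (𝒢.t g)
  bijOn : ∀ g, Set.BijOn (act g) (car (𝒢.inv g)) (car g)
  act_id : ∀ e, 𝒢.obj e → ∀ x ∈ car e, act e x = x
  act_mul : ∀ g h, 𝒢.s g = 𝒢.t h → ∀ x ∈ car (𝒢.inv h),
    act g (act h x) = act (𝒢.mul g h) x

/-- `X` is a split `𝒢`-set: `X` is the disjoint union of the `X_e`, `e ∈ 𝒢₀`. -/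
def GpdSetAction.Split {G : Type u} {𝒢 : Gpd G} {X : Type v} (α : GpdSetAction 𝒢 X) : Prop :=
  ∀ x : X, ∃! e : G, 𝒢.obj e ∧ x ∈ α.car e

/-- The action is fully faithful: if `α_g` fixes some `x ∈ X_g ∩ X_{g⁻¹}`
then `g` is an identity. -/
def GpdSetAction.FullyFaithful {G : Type u} {𝒢 : Gpd G} {X : Type v}
    (α : GpdSetAction 𝒢 X) : Prop :=
  ∀ g x, x ∈ α.car g ∩ α.car (𝒢.inv g) → α.act g x = x → 𝒢.obj g

/-- A `𝒢`-grading of the `k`-algebra `A`:  `A = ⊕_{g ∈ 𝒢} A_g` with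
`A_g A_h ⊆ A_{gh}` for composable `g, h` and `A_g A_h = 0` otherwise. -/
structure GpdGrading {G : Type u} (𝒢 : Gpd G) (k : Type v) (A : Type w)
    [Field k] [Ring A] [Algebra k A] where
  comp : G → Submodule k A
  internal : DirectSum.IsInternal comp
  mul_mem : ∀ g h, 𝒢.s g = 𝒢.t h → ∀ a ∈ comp g, ∀ b ∈ comp h, a * b ∈ comp (𝒢.mul g h)
  mul_eq_zero : ∀ g h, 𝒢.s g ≠ 𝒢.t h → ∀ a ∈ comp g, ∀ b ∈ comp h, a * b = 0

/-- The homogeneous component of degree `g` of `a ∈ A`. -/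
noncomputable def GpdGrading.proj {G : Type u} {𝒢 : Gpd G} {k : Type v} {A : Type w}
    [Field k] [Ring A] [Algebra k A] (𝒜 : GpdGrading 𝒢 k A) (g : G) (a : A) : A :=
  ((Equiv.ofBijective _ 𝒜.internal).symm a g : A)

/-- `one : G → A` is a family of local units for the grading: each `one e`
(`e ∈ 𝒢₀`) is an identity element of `A_e` and `1_A = Σ_{e ∈ 𝒢₀} 1_e`. -/
def IsIdFamily {G : Type u} {𝒢 : Gpd G} {k : Type v} {A : Type w}
    [Field k] [Ring A] [Algebra k A] (𝒜 : GpdGrading 𝒢 k A) (one : G → A) : Prop :=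
  (∀ e, 𝒢.obj e → one e ∈ 𝒜.comp e ∧ ∀ a ∈ 𝒜.comp e, one e * a = a ∧ a * one e = a) ∧
  (1 : A) = ∑ᶠ e ∈ 𝒢.Objs, one e

/-- The multiplication of the smash product `A #_α^𝒢 X`, defined on the
ambient space of formal sums `Σ a_{(g,x)} δ_{(g,x)}`:
`(a δ_{(g,x)}) (b δ_{(h,y)}) = (a b) δ_{(gh, y)}` when `d(g) = r(h)` and
`α_h(y) = x`, and `0` otherwise. -/
noncomputable def smashMul {G : Type u} {𝒢 : Gpd G} {X : Type v} {A : Type w} [Ring A]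
    (α : GpdSetAction 𝒢 X) (f₁ f₂ : (G × X) →₀ A) : (G × X) →₀ A :=
  f₁.sum fun p a => f₂.sum fun q b =>
    if 𝒢.s p.1 = 𝒢.t q.1 ∧ α.act q.1 q.2 = p.2
    then Finsupp.single (𝒢.mul p.1 q.1, q.2) (a * b) else 0

/-- The underlying set of the smash product `A #_α^𝒢 X = ⊕_{g} ⊕_{x ∈ X_{d(g)}} A_g δ_x`:
those formal sums whose `(g,x)`-coefficient lies in `A_g`, supported on pairs
with `x ∈ X_{d(g)}`. -/
def smashSet {G : Type u} {𝒢 : Gpd G} {X : Type v} {k : Type*} {A : Type w}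
    [Field k] [Ring A] [Algebra k A]
    (α : GpdSetAction 𝒢 X) (𝒜 : GpdGrading 𝒢 k A) : Set ((G × X) →₀ A) :=
  {f | ∀ p : G × X, f p ∈ 𝒜.comp p.1 ∧ (f p ≠ 0 → p.2 ∈ α.car (𝒢.s p.1))}

/-- The identity element `Σ_{e ∈ 𝒢₀} Σ_{x ∈ X_e} 1_e δ_x` of the smash product. -/
noncomputable def smashOne {G : Type u} {𝒢 : Gpd G} {X : Type v} {A : Type w} [Ring A]
    (α : GpdSetAction 𝒢 X) (one : G → A) : (G × X) →₀ A :=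
  ∑ᶠ e ∈ 𝒢.Objs, ∑ᶠ x ∈ α.car e, Finsupp.single ((e, x) : G × X) (one e)

/-- The `x`-stabilizer `𝒢_x = {g ∈ 𝒢_e : α_g(x) = x}` (where `x ∈ X_e`). -/
def stabilizer {G : Type u} {𝒢 : Gpd G} {X : Type v} (α : GpdSetAction 𝒢 X)
    (x : X) : Set G :=
  {g | 𝒢.s g = 𝒢.t g ∧ x ∈ α.car (𝒢.s g) ∧ α.act g x = x}

/-- `A^{𝒢_x} = ⊕_{g ∈ 𝒢_x} A_g`, the graded subalgebra supported on the
stabilizer of `x`. -/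
def stabSubalg {G : Type u} {𝒢 : Gpd G} {X : Type v} {k : Type*} {A : Type w}
    [Field k] [Ring A] [Algebra k A]
    (α : GpdSetAction 𝒢 X) (𝒜 : GpdGrading 𝒢 k A) (x : X) : Set A :=
  {a | ∀ g, 𝒜.proj g a ≠ 0 → g ∈ stabilizer α x}

/-- `^xV = ⊕_{y ∈ X} V_{x,y} = ⊕_{h : d(h) = e} A_h` (where `x ∈ X_e`). -/
def xVset {G : Type u} {𝒢 : Gpd G} {X : Type v} {k : Type*} {A : Type w}
    [Field k] [Ring A] [Algebra k A]
    (α : GpdSetAction 𝒢 X) (𝒜 : GpdGrading 𝒢 k A) (x : X) : Set A :=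
  {a | ∀ h, 𝒜.proj h a ≠ 0 → x ∈ α.car (𝒢.s h)}

/-- `V^x = ⊕_{y ∈ X} V_{y,x} = ⊕_{h : α_h(y) = x for some y ∈ X_{d(h)}} A_h`. -/
def Vxset {G : Type u} {𝒢 : Gpd G} {X : Type v} {k : Type*} {A : Type w}
    [Field k] [Ring A] [Algebra k A]
    (α : GpdSetAction 𝒢 X) (𝒜 : GpdGrading 𝒢 k A) (x : X) : Set A :=
  {a | ∀ h, 𝒜.proj h a ≠ 0 → ∃ y ∈ α.car (𝒢.s h), α.act h y = x}

/-- The `y`-component `w_y ∈ V_{x,y}` of `w ∈ ^xV` with respect to the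
grading `^xV = ⊕_{y ∈ X} V_{x,y}`. -/
noncomputable def xVcomp {G : Type u} {𝒢 : Gpd G} {X : Type v} {k : Type*} {A : Type w}
    [Field k] [Ring A] [Algebra k A]
    (α : GpdSetAction 𝒢 X) (𝒜 : GpdGrading 𝒢 k A) (x : X) (w : A) (y : X) : A :=
  ∑ᶠ h ∈ {h | x ∈ α.car (𝒢.s h) ∧ α.act h x = y}, 𝒜.proj h w

/-- The `z`-component `v_z ∈ V_{z,x}` of `v ∈ V^x` with respect to the
grading `V^x = ⊕_{z ∈ X} V_{z,x}`. -/
noncomputable def Vxcomp {G : Type u} {𝒢 : Gpd G} {X : Type v} {k : Type*} {A : Type w}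
    [Field k] [Ring A] [Algebra k A]
    (α : GpdSetAction 𝒢 X) (𝒜 : GpdGrading 𝒢 k A) (x : X) (v : A) (z : X) : A :=
  ∑ᶠ h ∈ {h | z ∈ α.car (𝒢.s h) ∧ α.act h z = x}, 𝒜.proj h v

/-- The left action of `A #_α^𝒢 X` on `^xV`: `(a_g δ_y) · w = a_g w_y`. -/
noncomputable def lSmashAct {G : Type u} {𝒢 : Gpd G} {X : Type v} {k : Type*} {A : Type w}
    [Field k] [Ring A] [Algebra k A]
    (α : GpdSetAction 𝒢 X) (𝒜 : GpdGrading 𝒢 k A) (x : X)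
    (f : (G × X) →₀ A) (w : A) : A :=
  f.sum fun p a => a * xVcomp α 𝒜 x w p.2

/-- The right action of `A #_α^𝒢 X` on `V^x`: `v · (a_g δ_y) = (v a_g)_y`. -/
noncomputable def rSmashAct {G : Type u} {𝒢 : Gpd G} {X : Type v} {k : Type*} {A : Type w}
    [Field k] [Ring A] [Algebra k A]
    (α : GpdSetAction 𝒢 X) (𝒜 : GpdGrading 𝒢 k A) (x : X)
    (v : A) (f : (G × X) →₀ A) : A :=
  f.sum fun p a => Vxcomp α 𝒜 x (v * a) p.2

/-- The Morita pairing `( , ) : V^x ⊗_{A #_α^𝒢 X} {^xV} → A^{𝒢_x}`,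
`(v, w) = Σ_{g ∈ 𝒢_x} (vw)_g`. -/
noncomputable def moritaPair {G : Type u} {𝒢 : Gpd G} {X : Type v} {k : Type*} {A : Type w}
    [Field k] [Ring A] [Algebra k A]
    (α : GpdSetAction 𝒢 X) (𝒜 : GpdGrading 𝒢 k A) (x : X) (v w : A) : A :=
  ∑ᶠ g ∈ stabilizer α x, 𝒜.proj g (v * w)

/-- The Morita pairing `[ , ] : {^xV} ⊗_{A^{𝒢_x}} V^x → A #_α^𝒢 X`,
`[w, v] = Σ_{z ∈ X} (w v_z) δ_z`. -/
noncomputable def moritaBrack {G : Type u} {𝒢 : Gpd G} {X : Type v} {k : Type*} {A : Type w}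
    [Field k] [Ring A] [Algebra k A]
    (α : GpdSetAction 𝒢 X) (𝒜 : GpdGrading 𝒢 k A) (x : X) (w v : A) : (G × X) →₀ A :=
  ∑ᶠ z : X, ∑ᶠ g : G,
    Finsupp.single ((g, z) : G × X) (𝒜.proj g (w * Vxcomp α 𝒜 x v z))

/-!
For `a ∈ A_g` and `y ∈ X_{d(g)}` we have `a = a 1_{d(g)}`, and by hypothesis `1_{d(g)}` is a sum
of products `b c` with `b ∈ A_{h⁻¹}`, `c ∈ A_h` and `α_h(y) = x`; splitness forces
`d(h) = d(g)`. Each `(a b c) δ_y` is then the bracket `[a b, c]`, so `[ , ]` is onto. For `y = x`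
and `g ∈ 𝒢_x` the same products give `a b c = (a b, c)`, so `( , )` is onto as well.
-/

namespace Gpd

variable {G : Type u} (𝒢 : Gpd G)

theorem mul_eq_left {g c : G} (h : 𝒢.s g = 𝒢.t c) : 𝒢.mul g c = g ↔ c = 𝒢.s g := by
  refine ⟨fun hgc => ?_, fun hc => hc ▸ 𝒢.mul_src g⟩
  calc c = 𝒢.mul (𝒢.t c) c := (𝒢.tgt_mul c).symm
    _ = 𝒢.mul (𝒢.mul (𝒢.inv g) g) c := by rw [𝒢.inv_mul, h]
    _ = 𝒢.mul (𝒢.inv g) (𝒢.mul g c) := 𝒢.mul_assoc _ _ _ (𝒢.s_inv g) h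
    _ = 𝒢.s g := by rw [hgc, 𝒢.inv_mul]

theorem s_eq_t_inv {g h : G} (hgh : 𝒢.s g = 𝒢.s h) : 𝒢.s g = 𝒢.t (𝒢.inv h) := by
  rw [𝒢.t_inv, hgh]

theorem s_mul_inv {g h : G} (hgh : 𝒢.s g = 𝒢.s h) : 𝒢.s (𝒢.mul g (𝒢.inv h)) = 𝒢.t h := by
  rw [𝒢.s_mul _ _ (𝒢.s_eq_t_inv hgh), 𝒢.s_inv]

theorem mul_inv_mul_cancel {g h : G} (hgh : 𝒢.s g = 𝒢.s h) :
    𝒢.mul (𝒢.mul g (𝒢.inv h)) h = g := by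
  rw [𝒢.mul_assoc _ _ _ (𝒢.s_eq_t_inv hgh) (𝒢.s_inv h), 𝒢.inv_mul, ← hgh, 𝒢.mul_src]

end Gpd

namespace GpdSetAction

variable {G : Type u} {𝒢 : Gpd G} {X : Type v}

theorem Split.s_eq {α : GpdSetAction 𝒢 X} (hsplit : α.Split) {y : X} {g h : G}
    (hg : y ∈ α.car (𝒢.s g)) (hh : y ∈ α.car (𝒢.s h)) : 𝒢.s g = 𝒢.s h :=
  (hsplit y).unique ⟨𝒢.s_s g, hg⟩ ⟨𝒢.s_s h, hh⟩

variable (α : GpdSetAction 𝒢 X)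

theorem car_inv (h : G) : α.car (𝒢.inv h) = α.car (𝒢.s h) := by
  rw [α.car_t, 𝒢.t_inv]

theorem act_mem {h : G} {y : X} (hy : y ∈ α.car (𝒢.s h)) : α.act h y ∈ α.car (𝒢.t h) :=
  α.car_t h ▸ (α.bijOn h).mapsTo (by rwa [car_inv])

theorem injOn_act (h : G) : Set.InjOn (α.act h) (α.car (𝒢.s h)) :=
  α.car_inv h ▸ (α.bijOn h).injOn

theorem act_inv_of_act_eq_self {h : G} {y : X} (hy : y ∈ α.car (𝒢.s h))
    (hfix : α.act h y = y) : α.act (𝒢.inv h) y = y := by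
  conv_lhs => rw [← hfix]
  rw [α.act_mul _ _ (𝒢.s_inv h) y (by rwa [car_inv]), 𝒢.inv_mul]
  exact α.act_id _ (𝒢.s_s h) y hy

end GpdSetAction

namespace GpdGrading

variable {G : Type u} {𝒢 : Gpd G} {k : Type*} {A : Type w} [Field k] [Ring A] [Algebra k A]
  (𝒜 : GpdGrading 𝒢 k A)

instance : DirectSum.Decomposition 𝒜.comp := 𝒜.internal.chooseDecomposition

theorem proj_eq_decompose (g : G) (a : A) :
    𝒜.proj g a = (DirectSum.decompose 𝒜.comp a g : A) := rfl

theorem proj_mem (g : G) (a : A) : 𝒜.proj g a ∈ 𝒜.comp g :=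
  (DirectSum.decompose 𝒜.comp a g).2

@[simp]
theorem proj_zero (g : G) : 𝒜.proj g 0 = 0 := by
  simp [proj_eq_decompose]

variable {𝒜}

theorem proj_of_mem {g : G} {a : A} (ha : a ∈ 𝒜.comp g) : 𝒜.proj g a = a :=
  DirectSum.decompose_of_mem_same 𝒜.comp ha

theorem proj_of_mem_of_ne {g g' : G} {a : A} (ha : a ∈ 𝒜.comp g) (hne : g' ≠ g) :
    𝒜.proj g' a = 0 :=
  DirectSum.decompose_of_mem_ne 𝒜.comp ha hne.symm

theorem mul_inv_mem {g h : G} (hgh : 𝒢.s g = 𝒢.s h) {a b : A} (ha : a ∈ 𝒜.comp g)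
    (hb : b ∈ 𝒜.comp (𝒢.inv h)) : a * b ∈ 𝒜.comp (𝒢.mul g (𝒢.inv h)) :=
  𝒜.mul_mem _ _ (𝒢.s_eq_t_inv hgh) a ha b hb

theorem mul_inv_mul_mem {g h : G} (hgh : 𝒢.s g = 𝒢.s h) {a b c : A} (ha : a ∈ 𝒜.comp g)
    (hb : b ∈ 𝒜.comp (𝒢.inv h)) (hc : c ∈ 𝒜.comp h) : a * b * c ∈ 𝒜.comp g :=
  𝒢.mul_inv_mul_cancel hgh ▸ 𝒜.mul_mem _ _ (𝒢.s_mul_inv hgh) _ (mul_inv_mem hgh ha hb) c hc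

theorem proj_mul_of_ne_s {g c : G} {a b : A} (ha : a ∈ 𝒜.comp g) (hb : b ∈ 𝒜.comp c)
    (hc : c ≠ 𝒢.s g) : 𝒜.proj g (a * b) = 0 := by
  by_cases hgc : 𝒢.s g = 𝒢.t c
  · exact proj_of_mem_of_ne (𝒜.mul_mem g c hgc a ha b hb)
      fun h => hc ((𝒢.mul_eq_left hgc).1 h.symm)
  · rw [𝒜.mul_eq_zero g c hgc a ha b hb, proj_zero]

theorem mul_proj_s_one {g : G} {a : A} (ha : a ∈ 𝒜.comp g) : a * 𝒜.proj (𝒢.s g) 1 = a := by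
  have hexpand : 𝒜.proj g a
      = ∑ c ∈ (DirectSum.decompose 𝒜.comp (1 : A)).support, 𝒜.proj g (a * 𝒜.proj c 1) := by
    conv_lhs => rw [← mul_one a, ← DirectSum.sum_support_decompose 𝒜.comp (1 : A),
      Finset.mul_sum]
    simp only [proj_eq_decompose, DirectSum.decompose_sum, DirectSum.sum_apply,
      AddSubmonoidClass.coe_finsetSum]
  have hmem : a * 𝒜.proj (𝒢.s g) 1 ∈ 𝒜.comp g := by
    simpa only [𝒢.mul_src] using 𝒜.mul_mem _ _ (𝒢.t_s g).symm a ha _ (𝒜.proj_mem _ 1)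
  calc a * 𝒜.proj (𝒢.s g) 1 = 𝒜.proj g (a * 𝒜.proj (𝒢.s g) 1) := (proj_of_mem hmem).symm
    _ = 𝒜.proj g a := by
        rw [hexpand]
        refine (Finset.sum_eq_single _ (fun c _ hc => proj_mul_of_ne_s ha (𝒜.proj_mem c 1) hc)
          fun hs => ?_).symm
        rw [proj_eq_decompose _ (𝒢.s g), DFinsupp.notMem_support_iff.1 hs]
        simp
    _ = a := proj_of_mem ha

end GpdGrading

/-- The image of the pairing `S ⊗ T → M` induced by `F`. -/
def pairingSums {α β M : Type*} [AddCommMonoid M] (F : α → β → M) (S : Set α) (T : Set β) :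
    AddSubmonoid M where
  carrier := {m | ∃ (n : ℕ) (w : Fin n → α) (v : Fin n → β),
    (∀ i, w i ∈ S ∧ v i ∈ T) ∧ m = ∑ i, F (w i) (v i)}
  zero_mem' := ⟨0, Fin.elim0, Fin.elim0, fun i => i.elim0, by simp⟩
  add_mem' := by
    rintro _ _ ⟨n₁, w₁, v₁, h₁, rfl⟩ ⟨n₂, w₂, v₂, h₂, rfl⟩
    refine ⟨n₁ + n₂, Fin.append w₁ w₂, Fin.append v₁ v₂,
      Fin.addCases (by simpa using h₁) (by simpa using h₂), ?_⟩
    simp [Fin.sum_univ_add]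

theorem mem_pairingSums {α β M : Type*} [AddCommMonoid M] {F : α → β → M} {S : Set α}
    {T : Set β} {m : M} :
    m ∈ pairingSums F S T ↔ ∃ (n : ℕ) (w : Fin n → α) (v : Fin n → β),
      (∀ i, w i ∈ S ∧ v i ∈ T) ∧ m = ∑ i, F (w i) (v i) :=
  Iff.rfl

theorem apply_mem_pairingSums {α β M : Type*} [AddCommMonoid M] {F : α → β → M}
    {S : Set α} {T : Set β} {w : α} {v : β} (hw : w ∈ S) (hv : v ∈ T) :
    F w v ∈ pairingSums F S T :=
  mem_pairingSums.2 ⟨1, fun _ => w, fun _ => v, fun _ => ⟨hw, hv⟩, by simp⟩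

section Grading

variable {G : Type u} {𝒢 : Gpd G} {k : Type*} {A : Type w} [Field k] [Ring A] [Algebra k A]
  {𝒜 : GpdGrading 𝒢 k A}

theorem map_mul_mem_of_mem_iSup_mul {M : Type*} [AddCommMonoid M] (P : AddSubmonoid M)
    (φ : A →+ M) (a : A) (H : Set G)
    (hgen : ∀ h ∈ H, ∀ b ∈ 𝒜.comp (𝒢.inv h), ∀ c ∈ 𝒜.comp h, φ (a * b * c) ∈ P) {u : A}
    (hu : u ∈ ⨆ h ∈ H, (𝒜.comp (𝒢.inv h) * 𝒜.comp h : Submodule k A)) : φ (a * u) ∈ P := by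
  have hadd : ∀ u₁ u₂, φ (a * u₁) ∈ P → φ (a * u₂) ∈ P → φ (a * (u₁ + u₂)) ∈ P :=
    fun _ _ h₁ h₂ => by rw [mul_add, map_add]; exact P.add_mem h₁ h₂
  rw [iSup_subtype'] at hu
  refine Submodule.iSup_induction _ (motive := fun u => φ (a * u) ∈ P) hu
    (fun h u hu => ?_) (by simp) hadd
  refine Submodule.mul_induction_on (C := fun u => φ (a * u) ∈ P) hu
    (fun b hb c hc => ?_) hadd
  simpa only [mul_assoc] using hgen h h.2 b hb c hc

/-- Write `a = a 1_{d(g)}` and expand `1_{d(g)}` through `hH`. -/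
theorem map_mem_of_iSup_mul_eq {M : Type*} [AddCommMonoid M] (P : AddSubmonoid M)
    (φ : A →+ M) {g : G} {a : A} (ha : a ∈ 𝒜.comp g) (H : Set G)
    (hH : (⨆ h ∈ H, (𝒜.comp (𝒢.inv h) * 𝒜.comp h : Submodule k A)) = ⨆ g, 𝒜.comp (𝒢.s g))
    (hgen : ∀ h ∈ H, ∀ b ∈ 𝒜.comp (𝒢.inv h), ∀ c ∈ 𝒜.comp h, φ (a * b * c) ∈ P) :
    φ a ∈ P := by
  have hunit : 𝒜.proj (𝒢.s g) 1 ∈ ⨆ g, 𝒜.comp (𝒢.s g) :=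
    Submodule.mem_iSup_of_mem (𝒢.s g) (by rw [𝒢.s_s]; exact 𝒜.proj_mem _ 1)
  rw [← hH] at hunit
  simpa only [GpdGrading.mul_proj_s_one ha] using map_mul_mem_of_mem_iSup_mul P φ a H hgen hunit

variable {X : Type v} (α : GpdSetAction 𝒢 X) {x : X}

theorem mem_xVset_of_mem {h : G} {a : A} (ha : a ∈ 𝒜.comp h) (hx : x ∈ α.car (𝒢.s h)) :
    a ∈ xVset α 𝒜 x := by
  intro h' hne
  obtain rfl : h' = h := by_contra fun h'h => hne (GpdGrading.proj_of_mem_of_ne ha h'h)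
  exact hx

theorem mem_Vxset_of_mem {h : G} {a : A} (ha : a ∈ 𝒜.comp h) {y : X}
    (hy : y ∈ α.car (𝒢.s h)) (hyx : α.act h y = x) : a ∈ Vxset α 𝒜 x := by
  intro h' hne
  obtain rfl : h' = h := by_contra fun h'h => hne (GpdGrading.proj_of_mem_of_ne ha h'h)
  exact ⟨y, hy, hyx⟩

theorem Vxcomp_of_mem {h : G} {v : A} (hv : v ∈ 𝒜.comp h) {y : X}
    (hy : y ∈ α.car (𝒢.s h)) (hyx : α.act h y = x) (z : X) :
    Vxcomp α 𝒜 x v z = if z = y then v else 0 := by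
  rw [Vxcomp, finsum_mem_def, finsum_eq_single _ h fun h' hne => by
    simp [GpdGrading.proj_of_mem_of_ne hv hne]]
  have hzy : z ∈ α.car (𝒢.s h) ∧ α.act h z = x ↔ z = y :=
    ⟨fun ⟨hz, hzx⟩ => α.injOn_act h hz hy (hzx.trans hyx.symm), fun hz => hz ▸ ⟨hy, hyx⟩⟩
  simp only [Set.indicator_apply, Set.mem_ofPred_eq, hzy, GpdGrading.proj_of_mem hv]

theorem moritaBrack_of_mem {g h : G} {w v : A} (hv : v ∈ 𝒜.comp h) {y : X}
    (hy : y ∈ α.car (𝒢.s h)) (hyx : α.act h y = x) (hwv : w * v ∈ 𝒜.comp g) :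
    moritaBrack α 𝒜 x w v = Finsupp.single (g, y) (w * v) := by
  rw [moritaBrack, finsum_eq_single _ y fun z hz => by simp [Vxcomp_of_mem α hv hy hyx, hz],
    finsum_eq_single _ g fun g' hg' => by
      simp [Vxcomp_of_mem α hv hy hyx, GpdGrading.proj_of_mem_of_ne hwv hg'],
    Vxcomp_of_mem α hv hy hyx, if_pos rfl, GpdGrading.proj_of_mem hwv]

theorem moritaPair_of_mem {g : G} {v w : A} (hvw : v * w ∈ 𝒜.comp g)
    (hg : g ∈ stabilizer α x) : moritaPair α 𝒜 x v w = v * w := by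
  rw [moritaPair, finsum_mem_def, finsum_eq_single _ g fun g' hg' => by
    simp [GpdGrading.proj_of_mem_of_ne hvw hg'], Set.indicator_of_mem hg,
    GpdGrading.proj_of_mem hvw]

end Grading

section MoritaContext

variable {G : Type u} {𝒢 : Gpd G} {X : Type v} {k : Type*} {A : Type w}
  [Field k] [Ring A] [Algebra k A] (α : GpdSetAction 𝒢 X) (𝒜 : GpdGrading 𝒢 k A) (x : X)

abbrev bracketImage : AddSubmonoid ((G × X) →₀ A) :=
  pairingSums (moritaBrack α 𝒜 x) (xVset α 𝒜 x) (Vxset α 𝒜 x)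

abbrev pairImage : AddSubmonoid A :=
  pairingSums (moritaPair α 𝒜 x) (Vxset α 𝒜 x) (xVset α 𝒜 x)

variable {α 𝒜 x}

/-- `(a b c) δ_y = [a b, c]` with `a b ∈ ^xV` and `c ∈ V^x`. -/
theorem single_mul_inv_mul_mem_bracketImage (hsplit : α.Split) {g h : G} {y : X}
    (hyg : y ∈ α.car (𝒢.s g)) (hyh : y ∈ α.car (𝒢.s h)) (hyx : α.act h y = x) {a b c : A}
    (ha : a ∈ 𝒜.comp g) (hb : b ∈ 𝒜.comp (𝒢.inv h)) (hc : c ∈ 𝒜.comp h) :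
    Finsupp.single (g, y) (a * b * c) ∈ bracketImage α 𝒜 x := by
  have hgh := hsplit.s_eq hyg hyh
  rw [← moritaBrack_of_mem α hc hyh hyx (GpdGrading.mul_inv_mul_mem hgh ha hb hc)]
  refine apply_mem_pairingSums (mem_xVset_of_mem α (GpdGrading.mul_inv_mem hgh ha hb) ?_)
    (mem_Vxset_of_mem α hc hyh hyx)
  rw [𝒢.s_mul_inv hgh, ← hyx]
  exact α.act_mem hyh

/-- `a b c = (a b, c)` with `a b ∈ V^x` and `c ∈ ^xV`. -/
theorem mul_inv_mul_mem_pairImage (hsplit : α.Split) {g h : G} (hg : g ∈ stabilizer α x)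
    (hxh : x ∈ α.car (𝒢.s h)) (hhx : α.act h x = x) {a b c : A}
    (ha : a ∈ 𝒜.comp g) (hb : b ∈ 𝒜.comp (𝒢.inv h)) (hc : c ∈ 𝒜.comp h) :
    a * b * c ∈ pairImage α 𝒜 x := by
  have hgh := hsplit.s_eq hg.2.1 hxh
  have hxt : x ∈ α.car (𝒢.t h) := hhx ▸ α.act_mem hxh
  have hfix : α.act (𝒢.mul g (𝒢.inv h)) x = x := by
    rw [← α.act_mul _ _ (𝒢.s_eq_t_inv hgh) x (by rwa [α.car_inv, 𝒢.s_inv]),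
      α.act_inv_of_act_eq_self hxh hhx, hg.2.2]
  rw [← moritaPair_of_mem α (GpdGrading.mul_inv_mul_mem hgh ha hb hc) hg]
  exact apply_mem_pairingSums
    (mem_Vxset_of_mem α (GpdGrading.mul_inv_mem hgh ha hb) (by rwa [𝒢.s_mul_inv hgh]) hfix)
    (mem_xVset_of_mem α hc hxh)

end MoritaContext

theorem sum_condition_implies_morita_strict_general
    {G : Type u} (𝒢 : Gpd G) {X : Type v}
    (k : Type*) (A : Type w) [Field k] [Ring A] [Algebra k A]
    (𝒜 : GpdGrading 𝒢 k A)
    (α : GpdSetAction 𝒢 X) (hsplit : α.Split)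
    (x : X)
    (hsum : ∀ y : X,
      (⨆ g ∈ {g : G | y ∈ α.car (𝒢.s g) ∧ α.act g y = x},
        (𝒜.comp (𝒢.inv g) * 𝒜.comp g : Submodule k A))
      = ⨆ g : G, 𝒜.comp (𝒢.s g)) :
    -- `[ , ]` is surjective: the Morita context is strict
    (∀ f ∈ smashSet α 𝒜, ∃ (n : ℕ) (w v : Fin n → A),
      (∀ i, w i ∈ xVset α 𝒜 x ∧ v i ∈ Vxset α 𝒜 x) ∧
      f = ∑ i, moritaBrack α 𝒜 x (w i) (v i)) ∧
    -- consequently `A^{𝒢_x}` and `A #_α^𝒢 X` are Morita equivalent: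
    -- `( , )` is surjective as well
    (∀ a ∈ stabSubalg α 𝒜 x, ∃ (n : ℕ) (v w : Fin n → A),
      (∀ i, v i ∈ Vxset α 𝒜 x ∧ w i ∈ xVset α 𝒜 x) ∧
      a = ∑ i, moritaPair α 𝒜 x (v i) (w i)) := by
  refine ⟨fun f hf => ?_, fun a ha => ?_⟩
  · change f ∈ bracketImage α 𝒜 x
    rw [← Finsupp.sum_single f]
    refine sum_mem fun ⟨g, y⟩ hgy => ?_
    have hy : y ∈ α.car (𝒢.s g) := (hf (g, y)).2 (Finsupp.mem_support_iff.1 hgy)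
    exact map_mem_of_iSup_mul_eq _ (Finsupp.singleAddHom (g, y)) (hf (g, y)).1 _ (hsum y)
      fun h ⟨hyh, hyx⟩ _ hb _ hc =>
        single_mul_inv_mul_mem_bracketImage hsplit hy hyh hyx (hf (g, y)).1 hb hc
  · change a ∈ pairImage α 𝒜 x
    rw [← DirectSum.sum_support_decompose 𝒜.comp a]
    refine sum_mem fun g hg => ?_
    have hstab : g ∈ stabilizer α x :=
      ha g fun h0 => DFinsupp.mem_support_iff.1 hg (Subtype.ext h0)
    exact map_mem_of_iSup_mul_eq _ (AddMonoidHom.id A) (𝒜.proj_mem g a) _ (hsum x)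
      fun h ⟨hxh, hhx⟩ _ hb _ hc =>
        mul_inv_mul_mem_pairImage hsplit hstab hxh hhx (𝒜.proj_mem g a) hb hc

/-- If `Σ_{g ∈ 𝒢, α_g(y) = x} A_{g⁻¹} A_g = Σ_{g ∈ 𝒢} A_{d(g)}`
for all `y ∈ X`, then the Morita context
`[A #_α^𝒢 X, V^x, ^xV, A^{𝒢_x}, [ , ], ( , )]` is strict, i.e. the map
`[ , ] : ^xV ⊗_{A^{𝒢_x}} V^x → A #_α^𝒢 X` is surjective; consequently
`A^{𝒢_x}` and `A #_α^𝒢 X` are Morita equivalent (both pairings of the context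
are surjective). -/
theorem sum_condition_implies_morita_strict
    {G : Type u} (𝒢 : Gpd G) {X : Type v}
    (k : Type*) (A : Type w) [Field k] [Ring A] [Algebra k A] [Finite X]
    (hG₀ : 𝒢.Objs.Finite) (𝒜 : GpdGrading 𝒢 k A)
    (α : GpdSetAction 𝒢 X) (hsplit : α.Split)
    (x : X) (e : G) (he : 𝒢.obj e) (hx : x ∈ α.car e)
    (hsum : ∀ y : X,
      (⨆ g ∈ {g : G | y ∈ α.car (𝒢.s g) ∧ α.act g y = x},
        (𝒜.comp (𝒢.inv g) * 𝒜.comp g : Submodule k A))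
      = ⨆ g : G, 𝒜.comp (𝒢.s g)) :
    -- `[ , ]` is surjective: the Morita context is strict
    (∀ f ∈ smashSet α 𝒜, ∃ (n : ℕ) (w v : Fin n → A),
      (∀ i, w i ∈ xVset α 𝒜 x ∧ v i ∈ Vxset α 𝒜 x) ∧
      f = ∑ i, moritaBrack α 𝒜 x (w i) (v i)) ∧
    -- consequently `A^{𝒢_x}` and `A #_α^𝒢 X` are Morita equivalent:
    -- `( , )` is surjective as well
    (∀ a ∈ stabSubalg α 𝒜 x, ∃ (n : ℕ) (v w : Fin n → A),
      (∀ i, v i ∈ Vxset α 𝒜 x ∧ w i ∈ xVset α 𝒜 x) ∧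
      a = ∑ i, moritaPair α 𝒜 x (v i) (w i)) :=
  sum_condition_implies_morita_strict_general 𝒢 k A 𝒜 α hsplit x hsum

end
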